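/- For p ∈ [1,∞), the unfolding operator T_ε : L^p(Ω) → L^p(Ω × Y) is linear and bounded with ‖T_ε(φ)‖_{L^p(Ω×Y)} ≤ |Y|^{1/p} ‖φ‖_{L^p(Ω)} for every φ ∈ L^p(Ω). -/

import Mathlib

/-!
On a cell `ε(ℓ + Y) ⊆ Ω` the unfolding of `f` is `y ↦ f (ε(ℓ + y))`, so its integral over `Y` is
the average `ε⁻³ ∫_{ε(ℓ+Y)} f` of `f` over that cell. Integrating this average over the cell gives
back `∫_{ε(ℓ+Y)} f`; summing over the disjoint cells that make up `Ω_ε⁻` yields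
`∫_{Ω×Y} T_ε f = ∫_{Ω_ε⁻} f ≤ ∫_Ω f` for `f ≥ 0`. Since `|0|^p = 0`, `|T_ε φ|^p = T_ε (|φ|^p)`, and
`|Y| = 1`.
-/

open MeasureTheory Set Filter

/-- The reference cell `Y = (−1/2, 1/2]³`. -/
def Ycell : Set (Fin 3 → ℝ) := {y | ∀ i, y i ∈ Set.Ioc (-(1/2) : ℝ) (1/2)}

/-- Integer-part map `[·]_Y : ℝ → ℤ` adapted to `Y = (−1/2,1/2]`: `z − [z]_Y ∈ (−1/2,1/2]`. -/
noncomputable def nint (z : ℝ) : ℤ := ⌈z - 1/2⌉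

/-- The cell `ε(ℓ + Y)`. -/
def cellY (ε : ℝ) (ℓ : Fin 3 → ℤ) : Set (Fin 3 → ℝ) :=
  {x | ∀ i, x i ∈ Set.Ioc (ε * ((ℓ i : ℝ) - 1/2)) (ε * ((ℓ i : ℝ) + 1/2))}

/-- `Ω_ε⁻`: the union of the ε-cells entirely contained in `Ω`. -/
def OmegaMinus (Ω : Set (Fin 3 → ℝ)) (ε : ℝ) : Set (Fin 3 → ℝ) :=
  ⋃ ℓ ∈ {ℓ : Fin 3 → ℤ | cellY ε ℓ ⊆ Ω}, cellY ε ℓ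

/-- The periodic unfolding operator `T_ε`:
`T_ε(φ)(x,y) = φ(ε[x/ε]_Y + εy)` on `Ω_ε⁻ × Y` and `0` on `(Ω \ Ω_ε⁻) × Y`. -/
noncomputable def unfold (ε : ℝ) (Ω : Set (Fin 3 → ℝ)) (φ : (Fin 3 → ℝ) → ℝ)
    (x y : Fin 3 → ℝ) : ℝ :=
  (OmegaMinus Ω ε).indicator (fun x => φ (fun i => ε * (nint (x i / ε) : ℝ) + ε * y i)) x

lemma nint_eq_of_mem_Ioc {z : ℝ} {ℓ : ℤ} (hz : z ∈ Ioc ((ℓ : ℝ) - 1/2) ((ℓ : ℝ) + 1/2)) :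
    nint z = ℓ := by
  rw [nint, Int.ceil_eq_iff]
  constructor <;> linarith [hz.1, hz.2]

lemma nint_div_eq_of_mem_cellY {ε : ℝ} (hε : 0 < ε) {ℓ : Fin 3 → ℤ} {x : Fin 3 → ℝ}
    (hx : x ∈ cellY ε ℓ) : (fun i => nint (x i / ε)) = ℓ := by
  funext i
  obtain ⟨h₁, h₂⟩ := hx i
  refine nint_eq_of_mem_Ioc ⟨?_, ?_⟩
  · rw [lt_div_iff₀ hε]; linarith
  · rw [div_le_iff₀ hε]; linarith

lemma cellY_eq_pi (ε : ℝ) (ℓ : Fin 3 → ℤ) :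
    cellY ε ℓ = univ.pi fun i => Ioc (ε * ((ℓ i : ℝ) - 1/2)) (ε * ((ℓ i : ℝ) + 1/2)) := by
  ext x; simp [cellY, Set.mem_pi]

lemma Ycell_eq_pi : Ycell = univ.pi fun _ : Fin 3 => Ioc (-(1/2) : ℝ) (1/2) := by
  ext y; simp [Ycell, Set.mem_pi]

lemma measurableSet_cellY (ε : ℝ) (ℓ : Fin 3 → ℤ) : MeasurableSet (cellY ε ℓ) := by
  rw [cellY_eq_pi]; exact .univ_pi fun _ => measurableSet_Ioc

lemma measurableSet_Ycell : MeasurableSet Ycell := by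
  rw [Ycell_eq_pi]; exact .univ_pi fun _ => measurableSet_Ioc

lemma volume_Ycell : volume Ycell = 1 := by
  rw [Ycell_eq_pi, volume_pi_pi]; norm_num

lemma volume_cellY {ε : ℝ} (hε : 0 ≤ ε) (ℓ : Fin 3 → ℤ) :
    volume (cellY ε ℓ) = ENNReal.ofReal (ε ^ 3) := by
  rw [cellY_eq_pi, volume_pi_pi, ENNReal.ofReal_pow hε]
  simp only [Real.volume_Ioc, show ∀ a : ℝ, ε * (a + 1/2) - ε * (a - 1/2) = ε from
    fun a => by ring, Finset.prod_const, Finset.card_univ, Fintype.card_fin]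

lemma preimage_smul_add_cellY {ε : ℝ} (hε : 0 < ε) (ℓ : Fin 3 → ℤ) :
    (fun y => ε • ((fun i => (ℓ i : ℝ)) + y)) ⁻¹' cellY ε ℓ = Ycell := by
  ext y
  simp only [mem_preimage, cellY, Ycell, mem_ofPred_eq, mem_Ioc, Pi.smul_apply, Pi.add_apply,
    smul_eq_mul]
  refine forall_congr' fun i => and_congr ?_ ?_
  · rw [mul_lt_mul_iff_right₀ hε]; constructor <;> intro h <;> linarith
  · rw [mul_le_mul_iff_right₀ hε]; constructor <;> intro h <;> linarith

lemma pairwise_disjoint_cellY {ε : ℝ} (hε : 0 < ε) :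
    Pairwise (Function.onFun Disjoint (cellY ε)) := fun _ _ hne =>
  disjoint_left.mpr fun _ hx hx' =>
    hne ((nint_div_eq_of_mem_cellY hε hx).symm.trans (nint_div_eq_of_mem_cellY hε hx'))

lemma measurableSet_OmegaMinus (Ω : Set (Fin 3 → ℝ)) (ε : ℝ) :
    MeasurableSet (OmegaMinus Ω ε) :=
  .biUnion (to_countable _) fun ℓ _ => measurableSet_cellY ε ℓ

lemma OmegaMinus_subset (Ω : Set (Fin 3 → ℝ)) (ε : ℝ) : OmegaMinus Ω ε ⊆ Ω :=
  iUnion₂_subset fun _ h => h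

lemma OmegaMinus_eq_iUnion (Ω : Set (Fin 3 → ℝ)) (ε : ℝ) :
    OmegaMinus Ω ε = ⋃ ℓ : {ℓ : Fin 3 → ℤ // cellY ε ℓ ⊆ Ω}, cellY ε ℓ :=
  biUnion_eq_iUnion _ _

lemma setIntegral_Ycell_comp_smul_add {ε : ℝ} (hε : 0 < ε) (ℓ : Fin 3 → ℤ)
    (g : (Fin 3 → ℝ) → ℝ) :
    ∫ y in Ycell, g (ε • ((fun i => (ℓ i : ℝ)) + y)) = (ε ^ 3)⁻¹ * ∫ z in cellY ε ℓ, g z := by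
  rw [← integral_indicator measurableSet_Ycell, ← integral_indicator (measurableSet_cellY ε ℓ),
    ← preimage_smul_add_cellY hε ℓ]
  refine (integral_congr_ae (ae_of_all _ fun y =>
    indicator_comp_right (g := g) (x := y) fun y => ε • ((fun i => (ℓ i : ℝ)) + y))).trans ?_
  rw [integral_add_left_eq_self (fun v => (cellY ε ℓ).indicator g (ε • v)),
    Measure.integral_comp_smul_of_nonneg volume _ ε (hR := hε.le),
    Module.finrank_fintype_fun_eq_card, Fintype.card_fin, smul_eq_mul]

noncomputable def cellAverage (ε : ℝ) (f : (Fin 3 → ℝ) → ℝ) (x : Fin 3 → ℝ) : ℝ :=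
  (ε ^ 3)⁻¹ * ∫ z in cellY ε (fun i => nint (x i / ε)), f z

lemma cellAverage_of_mem_cellY {ε : ℝ} (hε : 0 < ε) (f : (Fin 3 → ℝ) → ℝ) {ℓ : Fin 3 → ℤ}
    {x : Fin 3 → ℝ} (hx : x ∈ cellY ε ℓ) :
    cellAverage ε f x = (ε ^ 3)⁻¹ * ∫ z in cellY ε ℓ, f z := by
  rw [cellAverage, nint_div_eq_of_mem_cellY hε hx]

lemma cellAverage_nonneg {ε : ℝ} (hε : 0 ≤ ε) {f : (Fin 3 → ℝ) → ℝ} (hf : 0 ≤ f)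
    (x : Fin 3 → ℝ) : 0 ≤ cellAverage ε f x :=
  mul_nonneg (by positivity) (integral_nonneg hf)

lemma measurable_cellAverage (ε : ℝ) (f : (Fin 3 → ℝ) → ℝ) : Measurable (cellAverage ε f) :=
  measurable_const.mul <| (measurable_of_countable fun ℓ => ∫ z in cellY ε ℓ, f z).comp <|
    measurable_pi_lambda _ fun _ => Int.measurable_ceil.comp (by fun_prop)

lemma unfold_add (ε : ℝ) (Ω : Set (Fin 3 → ℝ)) (φ ψ : (Fin 3 → ℝ) → ℝ) (x y : Fin 3 → ℝ) :
    unfold ε Ω (fun z => φ z + ψ z) x y = unfold ε Ω φ x y + unfold ε Ω ψ x y := by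
  simp only [unfold, indicator_add]

lemma unfold_const_mul (ε : ℝ) (Ω : Set (Fin 3 → ℝ)) (c : ℝ) (φ : (Fin 3 → ℝ) → ℝ)
    (x y : Fin 3 → ℝ) : unfold ε Ω (fun z => c * φ z) x y = c * unfold ε Ω φ x y :=
  indicator_const_mul _ _ c x

lemma comp_unfold (ε : ℝ) (Ω : Set (Fin 3 → ℝ)) {g : ℝ → ℝ} (hg : g 0 = 0)
    (φ : (Fin 3 → ℝ) → ℝ) (x y : Fin 3 → ℝ) :
    g (unfold ε Ω φ x y) = unfold ε Ω (g ∘ φ) x y := by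
  rw [unfold, unfold, ← Function.comp_apply (f := g), ← indicator_comp_of_zero hg]
  rfl

lemma integral_Ycell_unfold {ε : ℝ} (hε : 0 < ε) (Ω : Set (Fin 3 → ℝ)) (f : (Fin 3 → ℝ) → ℝ)
    (x : Fin 3 → ℝ) :
    ∫ y in Ycell, unfold ε Ω f x y = (OmegaMinus Ω ε).indicator (cellAverage ε f) x := by
  by_cases hx : x ∈ OmegaMinus Ω ε
  · obtain ⟨ℓ, -, hxℓ⟩ := mem_iUnion₂.mp hx
    rw [indicator_of_mem hx, cellAverage_of_mem_cellY hε f hxℓ,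
      ← setIntegral_Ycell_comp_smul_add hε ℓ f]
    refine integral_congr_ae (ae_of_all _ fun y => ?_)
    simp only [unfold, indicator_of_mem hx, congrFun (nint_div_eq_of_mem_cellY hε hxℓ)]
    congr 1; funext i; simp [mul_add]
  · simp [unfold, indicator_of_notMem hx]

lemma lintegral_cellY_cellAverage {ε : ℝ} (hε : 0 < ε) {f : (Fin 3 → ℝ) → ℝ} (hf : 0 ≤ f)
    {ℓ : Fin 3 → ℤ} (hfi : IntegrableOn f (cellY ε ℓ)) :
    ∫⁻ x in cellY ε ℓ, ENNReal.ofReal (cellAverage ε f x)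
      = ∫⁻ x in cellY ε ℓ, ENNReal.ofReal (f x) := by
  rw [setLIntegral_congr_fun (measurableSet_cellY ε ℓ) fun x hx => by
      rw [cellAverage_of_mem_cellY hε f hx],
    setLIntegral_const, volume_cellY hε.le,
    ← ENNReal.ofReal_mul (mul_nonneg (by positivity) (integral_nonneg hf)),
    mul_comm (ε ^ 3)⁻¹, inv_mul_cancel_right₀ (by positivity),
    ofReal_integral_eq_lintegral_ofReal hfi (ae_of_all _ hf)]

lemma lintegral_OmegaMinus_congr {ε : ℝ} (hε : 0 < ε) {Ω : Set (Fin 3 → ℝ)}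
    {F G : (Fin 3 → ℝ) → ENNReal}
    (h : ∀ ℓ, cellY ε ℓ ⊆ Ω → ∫⁻ x in cellY ε ℓ, F x = ∫⁻ x in cellY ε ℓ, G x) :
    ∫⁻ x in OmegaMinus Ω ε, F x = ∫⁻ x in OmegaMinus Ω ε, G x := by
  have hdisj : Pairwise (Function.onFun Disjoint
      fun ℓ : {ℓ : Fin 3 → ℤ // cellY ε ℓ ⊆ Ω} => cellY ε ℓ) :=
    fun _ _ hne => pairwise_disjoint_cellY hε (Subtype.coe_ne_coe.mpr hne)
  rw [OmegaMinus_eq_iUnion, lintegral_iUnion (fun _ => measurableSet_cellY ε _) hdisj,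
    lintegral_iUnion (fun _ => measurableSet_cellY ε _) hdisj]
  exact tsum_congr fun ℓ => h ℓ ℓ.2

lemma integral_OmegaMinus_cellAverage {ε : ℝ} (hε : 0 < ε) {Ω : Set (Fin 3 → ℝ)}
    {f : (Fin 3 → ℝ) → ℝ} (hf : 0 ≤ f) (hfi : IntegrableOn f Ω) :
    ∫ x in OmegaMinus Ω ε, cellAverage ε f x = ∫ x in OmegaMinus Ω ε, f x := by
  rw [integral_eq_lintegral_of_nonneg_ae (ae_of_all _ (cellAverage_nonneg hε.le hf))
      (measurable_cellAverage ε f).aestronglyMeasurable,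
    integral_eq_lintegral_of_nonneg_ae (ae_of_all _ hf)
      (hfi.mono_set (OmegaMinus_subset Ω ε)).aestronglyMeasurable,
    lintegral_OmegaMinus_congr hε fun ℓ hℓ => lintegral_cellY_cellAverage hε hf (hfi.mono_set hℓ)]

lemma integral_integral_unfold_le {ε : ℝ} (hε : 0 < ε) {Ω : Set (Fin 3 → ℝ)}
    {f : (Fin 3 → ℝ) → ℝ} (hf : 0 ≤ f) (hfi : IntegrableOn f Ω) :
    ∫ x in Ω, ∫ y in Ycell, unfold ε Ω f x y ≤ ∫ x in Ω, f x := by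
  simp_rw [integral_Ycell_unfold hε]
  rw [integral_indicator (measurableSet_OmegaMinus Ω ε),
    Measure.restrict_restrict (measurableSet_OmegaMinus Ω ε),
    inter_eq_self_of_subset_left (OmegaMinus_subset Ω ε),
    integral_OmegaMinus_cellAverage hε hf hfi]
  exact setIntegral_mono_set hfi (ae_of_all _ hf) (OmegaMinus_subset Ω ε).eventuallyLE

theorem stmt7_general (Ω : Set (Fin 3 → ℝ))
    (ε : ℝ) (hε : 0 < ε) (p : ℝ) (hp : 1 ≤ p) (φ ψ : (Fin 3 → ℝ) → ℝ) (c : ℝ)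
    (hφ : IntegrableOn (fun x => |φ x| ^ p) Ω) :
    (∀ x y, unfold ε Ω (fun z => φ z + ψ z) x y = unfold ε Ω φ x y + unfold ε Ω ψ x y) ∧
      (∀ x y, unfold ε Ω (fun z => c * φ z) x y = c * unfold ε Ω φ x y) ∧
      (∫ x in Ω, ∫ y in Ycell, |unfold ε Ω φ x y| ^ p)
        ≤ (volume Ycell).toReal * ∫ x in Ω, |φ x| ^ p ∧
      ((∫ x in Ω, ∫ y in Ycell, |unfold ε Ω φ x y| ^ p) ^ (1 / p)
        ≤ (volume Ycell).toReal ^ (1 / p) * (∫ x in Ω, |φ x| ^ p) ^ (1 / p)) := by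
  have habs_zero : |(0 : ℝ)| ^ p = 0 := by rw [abs_zero, Real.zero_rpow (by linarith)]
  have hL1 : ∫ x in Ω, ∫ y in Ycell, |unfold ε Ω φ x y| ^ p
      ≤ (volume Ycell).toReal * ∫ x in Ω, |φ x| ^ p := by
    simp_rw [comp_unfold ε Ω (g := fun t => |t| ^ p) habs_zero, volume_Ycell, ENNReal.toReal_one, one_mul]
    exact integral_integral_unfold_le hε (fun x => Real.rpow_nonneg (abs_nonneg _) p) hφ
  refine ⟨unfold_add ε Ω φ ψ, unfold_const_mul ε Ω c φ, hL1, ?_⟩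
  rw [← Real.mul_rpow ENNReal.toReal_nonneg (integral_nonneg fun x => by positivity)]
  exact Real.rpow_le_rpow (integral_nonneg fun x => integral_nonneg fun y => by positivity) hL1
    (by positivity)

/-- For `p ∈ [1,∞)`, the unfolding operator `T_ε : L^p(Ω) → L^p(Ω × Y)` is linear and bounded:
`‖T_ε(φ)‖_{L^p(Ω×Y)} ≤ |Y|^{1/p} ‖φ‖_{L^p(Ω)}`, equivalently
`∫_{Ω×Y} |T_ε(φ)|^p ≤ |Y| ∫_Ω |φ|^p`. -/
theorem stmt7 (Ω : Set (Fin 3 → ℝ)) (hΩo : IsOpen Ω) (hΩb : Bornology.IsBounded Ω)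
    (ε : ℝ) (hε : 0 < ε) (p : ℝ) (hp : 1 ≤ p) (φ ψ : (Fin 3 → ℝ) → ℝ) (c : ℝ)
    (hφ : IntegrableOn (fun x => |φ x| ^ p) Ω) :
    (∀ x y, unfold ε Ω (fun z => φ z + ψ z) x y = unfold ε Ω φ x y + unfold ε Ω ψ x y) ∧
      (∀ x y, unfold ε Ω (fun z => c * φ z) x y = c * unfold ε Ω φ x y) ∧
      (∫ x in Ω, ∫ y in Ycell, |unfold ε Ω φ x y| ^ p)
        ≤ (volume Ycell).toReal * ∫ x in Ω, |φ x| ^ p ∧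
      ((∫ x in Ω, ∫ y in Ycell, |unfold ε Ω φ x y| ^ p) ^ (1 / p)
        ≤ (volume Ycell).toReal ^ (1 / p) * (∫ x in Ω, |φ x| ^ p) ^ (1 / p)) :=
  stmt7_general Ω ε hε p hp φ ψ c hφ
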